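/- arXiv:1105.4416 — 2 statements merged into one kernel-verified Lean document; each statement's English description precedes it below -/
import Mathlib

section
/- A strictly upper triangular n×n matrix Z over a field has rank n-1 if and only if all entries z_{i,i+1} (for 1 ≤ i ≤ n-1) immediately above the diagonal are nonzero. -/
/-!
Deleting the last row and the first column of a strictly upper triangular `Z`, which are zero,
does not change the rank and leaves an upper triangular `(n-1)×(n-1)` block whose diagonal is the
superdiagonal of `Z`. That block has full rank iff its determinant, the product of its diagonal,
is nonzero.
-/

open Matrix

namespace Matrix

section General

variable {m n m₀ n₀ R K : Type*}

theorem one_submatrix_mul_submatrix_of_injective [Fintype m₀] [DecidableEq m] [Semiring R]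
    (A : Matrix m n R) {r : m₀ → m} (hr : Function.Injective r)
    (hA : ∀ i ∉ Set.range r, A i = 0) :
    (1 : Matrix m m R).submatrix id r * A.submatrix r id = A := by
  ext i j
  simp only [mul_apply, submatrix_apply, id_eq, one_apply, ite_mul, one_mul, zero_mul]
  by_cases hi : i ∈ Set.range r
  · obtain ⟨k, rfl⟩ := hi
    rw [Fintype.sum_eq_single k fun l hl => if_neg (hr.ne hl.symm), if_pos rfl]
  · rw [hA i hi]
    exact Finset.sum_eq_zero fun k _ => if_neg fun h => hi ⟨k, h.symm⟩

theorem submatrix_mul_one_submatrix_of_injective [Fintype n₀] [DecidableEq n] [CommSemiring R]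
    (A : Matrix m n R) {c : n₀ → n} (hc : Function.Injective c)
    (hA : ∀ j ∉ Set.range c, ∀ i, A i j = 0) :
    A.submatrix id c * (1 : Matrix n n R).submatrix c id = A := by
  rw [← transpose_inj, transpose_mul, transpose_submatrix, transpose_submatrix, transpose_one]
  exact one_submatrix_mul_submatrix_of_injective Aᵀ hc fun j hj => funext (hA j hj)

theorem rank_submatrix_of_injective [Fintype m₀] [Fintype n] [Fintype n₀] [DecidableEq m]
    [DecidableEq n] [CommSemiring R] [StrongRankCondition R] (A : Matrix m n R) {r : m₀ → m}
    {c : n₀ → n} (hr : Function.Injective r) (hc : Function.Injective c)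
    (hA : ∀ i j, A i j ≠ 0 → i ∈ Set.range r ∧ j ∈ Set.range c) :
    (A.submatrix r c).rank = A.rank := by
  refine le_antisymm (rank_submatrix_le A r c) ?_
  have hrows : (1 : Matrix m m R).submatrix id r * A.submatrix r id = A :=
    one_submatrix_mul_submatrix_of_injective A hr fun i hi => funext fun j =>
      not_not.mp fun h => hi (hA i j h).1
  have hcols : (A.submatrix r id).submatrix id c * (1 : Matrix n n R).submatrix c id =
      A.submatrix r id :=
    submatrix_mul_one_submatrix_of_injective _ hc fun j hj i =>
      not_not.mp fun h => hj (hA (r i) j h).2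
  rw [← hcols] at hrows
  calc A.rank = ((1 : Matrix m m R).submatrix id r * ((A.submatrix r c) *
        (1 : Matrix n n R).submatrix c id)).rank := congrArg rank hrows.symm
    _ ≤ (A.submatrix r c * (1 : Matrix n n R).submatrix c id).rank := rank_mul_le_right _ _
    _ ≤ (A.submatrix r c).rank := rank_mul_le_left _ _

theorem isUnit_of_rank_eq_card [Fintype n] [DecidableEq n] [Field K] {A : Matrix n n K}
    (h : A.rank = Fintype.card n) : IsUnit A := by
  refine mulVec_surjective_iff_isUnit.mp
    (LinearMap.range_eq_top.mp ?_ : Function.Surjective A.mulVecLin)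
  apply Submodule.eq_top_of_finrank_eq
  simpa [rank] using h

theorem IsUpperTriangular.rank_eq_card_iff [Fintype n] [DecidableEq n] [LinearOrder n] [Field K]
    {A : Matrix n n K} (hA : A.IsUpperTriangular) :
    A.rank = Fintype.card n ↔ ∀ i, A i i ≠ 0 := by
  have hdet : A.det ≠ 0 ↔ ∀ i, A i i ≠ 0 := by
    simp [det_of_isUpperTriangular hA, Finset.prod_ne_zero_iff]
  rw [← hdet]
  exact ⟨fun h => (isUnit_iff_isUnit_det A).mp (isUnit_of_rank_eq_card h) |>.ne_zero,
    rank_of_det_ne_zero⟩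

end General

section StrictlyUpperTriangular

variable {R : Type*} {n : ℕ} {Z : Matrix (Fin (n + 1)) (Fin (n + 1)) R}

theorem isUpperTriangular_submatrix_castSucc_succ [Zero R] (hZ : ∀ i j, j ≤ i → Z i j = 0) :
    (Z.submatrix Fin.castSucc Fin.succ).IsUpperTriangular :=
  fun _ _ hji => hZ _ _ (Fin.succ_le_castSucc_iff.mpr hji)

theorem rank_submatrix_castSucc_succ [CommRing R] [StrongRankCondition R]
    (hZ : ∀ i j, j ≤ i → Z i j = 0) :
    (Z.submatrix Fin.castSucc Fin.succ).rank = Z.rank := by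
  refine rank_submatrix_of_injective Z (Fin.castSucc_injective n) (Fin.succ_injective n)
    fun i j hij => ?_
  have hlt : i < j := lt_of_not_ge fun h => hij (hZ i j h)
  exact ⟨Fin.exists_castSucc_eq.mpr (hlt.trans_le (Fin.le_last j)).ne,
    Fin.exists_succ_eq.mpr ((Fin.zero_le i).trans_lt hlt).ne'⟩

end StrictlyUpperTriangular

end Matrix

/-- A strictly upper triangular `n×n` matrix over a field has rank `n-1` iff all the
entries just above the principal diagonal are nonzero. -/
theorem stmt10 (n : ℕ) (F : Type) [Field F] (Z : Matrix (Fin n) (Fin n) F)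
    (hZ : ∀ i j : Fin n, j ≤ i → Z i j = 0) :
    Z.rank = n - 1 ↔
      ∀ (i : ℕ) (h : i + 1 < n), Z ⟨i, Nat.lt_of_succ_lt h⟩ ⟨i + 1, h⟩ ≠ 0 := by
  rcases n with _ | m
  · simpa using Z.rank_le_width
  have hrank := (isUpperTriangular_submatrix_castSucc_succ hZ).rank_eq_card_iff
  rw [Fintype.card_fin] at hrank
  rw [← rank_submatrix_castSucc_succ hZ, Nat.add_sub_cancel, hrank]
  exact ⟨fun h i hi => h ⟨i, by omega⟩, fun h i => h i (by omega)⟩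
end

section
/- The proportion of strictly upper triangular n×n matrices over F_q having rank n-1 among all strictly upper triangular matrices equals ((q-1)/q)^{n-1}. -/
/-!
A strictly upper triangular matrix `Z` of size `m + 1` has rank `m` exactly when none of its
superdiagonal entries `Z i (i + 1)` vanishes. Its first column is zero, so the rank is at most
`m`; if the superdiagonal entries are all nonzero, deleting the last row and the first column
leaves an upper triangular matrix with nonzero diagonal, of rank `m`. If instead `Z i (i + 1) = 0`,
then `Z` is the sum of its rows above `i` (rank `≤ i`) and of the remaining rows, which vanish in
the columns `≤ i + 1` (rank `≤ m - i - 1`). Hence both sets of matrices are described by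
independent conditions on the entries, and the proportion is the product of the entrywise
proportions: `(q - 1) / q` for each of the `m` superdiagonal entries and `1` elsewhere.
-/

open Matrix Finset

namespace Matrix

variable {m n R : Type*} [Fintype n] [Field R]

theorem rank_add_le (A B : Matrix m n R) : (A + B).rank ≤ A.rank + B.rank := by
  rw [rank, rank, rank, mulVecLin_add]
  exact (Submodule.finrank_mono (LinearMap.range_add_le _ _)).trans
    (Submodule.finrank_add_le_finrank_add_finrank _ _)

theorem rank_le_card_of_col_support_subset [Fintype m] (A : Matrix m n R) (s : Finset n)
    (hz : Function.support A.col ⊆ s) : A.rank ≤ #s := by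
  rw [← rank_transpose]
  exact rank_le_card_of_support_subset Aᵀ s hz

theorem card_forall_entry {α : Type*} [Fintype m] (p : m → n → α → Prop) :
    Nat.card {Z : Matrix m n α // ∀ i j, p i j (Z i j)} = ∏ i, ∏ j, Nat.card {x // p i j x} := by
  let e : {Z : Matrix m n α // ∀ i j, p i j (Z i j)} ≃ ∀ i j, {x // p i j x} :=
    Equiv.subtypePiEquivPi.trans (Equiv.piCongrRight fun _ => Equiv.subtypePiEquivPi)
  simp only [Nat.card_congr e, Nat.card_pi]

end Matrix

section StrictlyUpperTriangular

variable {F : Type*} [Field F] {m : ℕ} {Z : Matrix (Fin (m + 1)) (Fin (m + 1)) F}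

theorem rank_lt_of_superdiag_eq_zero (hZ : ∀ i j, j ≤ i → Z i j = 0) {i j : Fin (m + 1)}
    (hij : (j : ℕ) = i + 1) (h0 : Z i j = 0) : Z.rank < m := by
  set B : Matrix _ _ F := of fun a b => if a < i then Z a b else 0
  set C : Matrix _ _ F := of fun a b => if a < i then 0 else Z a b
  have hZBC : Z = B + C := by
    ext a b
    by_cases a < i <;> simp [B, C, *]
  have hB : B.rank ≤ i := by
    refine (rank_le_card_of_support_subset B (Iio i) ?_).trans (Fin.card_Iio i).le
    refine Function.support_subset_iff'.2 fun a ha => funext fun b => ?_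
    simp only [coe_Iio, Set.mem_Iio] at ha
    simp [B, ha]
  have hC : C.rank ≤ m - j := by
    refine (rank_le_card_of_col_support_subset C (Ioi j) ?_).trans (Fin.card_Ioi j).le
    refine Function.support_subset_iff'.2 fun b hb => funext fun a => ?_
    simp only [coe_Ioi, Set.mem_Ioi, not_lt] at hb
    simp only [col_apply, of_apply, C]
    split_ifs with ha
    · rfl
    rcases le_or_gt b a with hba | hab
    · exact hZ a b hba
    · obtain rfl : a = i := by omega
      obtain rfl : b = j := by omega
      exact h0
  calc Z.rank ≤ B.rank + C.rank := hZBC ▸ rank_add_le B C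
    _ ≤ i + (m - j) := add_le_add hB hC
    _ < m := by omega

theorem rank_eq_of_superdiag_ne_zero (hZ : ∀ i j, j ≤ i → Z i j = 0)
    (hd : ∀ i j : Fin (m + 1), (j : ℕ) = i + 1 → Z i j ≠ 0) : Z.rank = m := by
  refine le_antisymm ?_ ?_
  · refine (rank_le_card_of_col_support_subset Z {0}ᶜ ?_).trans
      (by rw [card_compl, card_singleton, Fintype.card_fin, Nat.add_sub_cancel])
    refine Function.support_subset_iff'.2 fun j hj => funext fun a => ?_
    simp only [coe_compl, coe_singleton, Set.mem_compl_iff, Set.mem_singleton_iff, not_not] at hj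
    exact hZ a j (hj ▸ Fin.zero_le a)
  · set T := Z.submatrix Fin.castSucc Fin.succ
    have hT : T.IsUpperTriangular := fun a b hba => hZ _ _ (Fin.succ_le_castSucc_iff.2 hba)
    have hdet : T.det ≠ 0 := by
      rw [det_of_isUpperTriangular hT]
      exact prod_ne_zero_iff.2 fun k _ => hd k.castSucc k.succ rfl
    calc m = T.rank := by rw [rank_of_det_ne_zero hdet, Fintype.card_fin]
      _ ≤ Z.rank := rank_submatrix_le _ _ _

theorem rank_eq_iff_superdiag_ne_zero (hZ : ∀ i j, j ≤ i → Z i j = 0) :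
    Z.rank = m ↔ ∀ i j : Fin (m + 1), (j : ℕ) = i + 1 → Z i j ≠ 0 :=
  ⟨fun h _ _ hij h0 => (rank_lt_of_superdiag_eq_zero hZ hij h0).ne h,
    rank_eq_of_superdiag_ne_zero hZ⟩

theorem strictUpper_and_rank_eq_iff :
    ((∀ i j, j ≤ i → Z i j = 0) ∧ Z.rank = m) ↔
      ∀ i j : Fin (m + 1), (j ≤ i → Z i j = 0) ∧ ((j : ℕ) = i + 1 → Z i j ≠ 0) := by
  simp only [forall_and]
  exact and_congr_right rank_eq_iff_superdiag_ne_zero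

end StrictlyUpperTriangular

theorem Fin.prod_prod_ite_val_eq_add_one {M : Type*} [CommMonoid M] (m : ℕ) (r : M) :
    ∏ i : Fin (m + 1), ∏ j : Fin (m + 1), (if (j : ℕ) = i + 1 then r else 1) = r ^ m := by
  have hsucc (k : Fin m) :
      ∏ j : Fin (m + 1), (if (j : ℕ) = k.castSucc + 1 then r else 1) = r := by
    simp only [Fin.val_castSucc, ← Fin.val_succ, ← Fin.ext_iff, prod_ite_eq', mem_univ, if_true]
  have hlast : ∏ j : Fin (m + 1), (if (j : ℕ) = Fin.last m + 1 then r else 1) = 1 :=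
    prod_eq_one fun j _ => if_neg (by simp; omega)
  rw [Fin.prod_univ_castSucc, hlast, mul_one]
  simp only [hsucc, prod_const]

theorem card_and_imp_ne_zero_div_card {F : Type*} [Field F] [Fintype F] {P Q : Prop}
    [Decidable Q] (hPQ : Q → ¬P) :
    (Nat.card {x : F // (P → x = 0) ∧ (Q → x ≠ 0)} : ℝ) / Nat.card {x : F // P → x = 0} =
      if Q then ((Nat.card F : ℝ) - 1) / Nat.card F else 1 := by
  classical
  by_cases hQ : Q
  · simp [hQ, hPQ hQ, Nat.card_eq_fintype_card, Fintype.card_subtype_compl,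
      Nat.cast_sub Fintype.card_pos]
  by_cases hP : P <;> simp [hQ, hP]

/-- The proportion of strictly upper triangular `n×n` matrices over `F_q` of rank `n-1`
among all strictly upper triangular matrices equals `((q-1)/q)^{n-1}`. -/
theorem stmt12 (n q : ℕ) (hn : 1 ≤ n) (F : Type) [Field F] [Fintype F]
    (hq : Fintype.card F = q) :
    (Nat.card {Z : Matrix (Fin n) (Fin n) F //
          (∀ i j : Fin n, j ≤ i → Z i j = 0) ∧ Z.rank = n - 1} : ℝ)
        / (Nat.card {Z : Matrix (Fin n) (Fin n) F // ∀ i j : Fin n, j ≤ i → Z i j = 0} : ℝ)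
      = (((q : ℝ) - 1) / q) ^ (n - 1) := by
  obtain ⟨m, rfl⟩ := Nat.exists_eq_add_of_le' hn
  rw [Nat.add_sub_cancel, ← hq, ← Nat.card_eq_fintype_card,
    ← Fin.prod_prod_ite_val_eq_add_one m,
    Nat.card_congr (Equiv.subtypeEquivRight fun Z => strictUpper_and_rank_eq_iff),
    card_forall_entry fun (i j : Fin (m + 1)) (x : F) =>
      (j ≤ i → x = 0) ∧ ((j : ℕ) = i + 1 → x ≠ 0),
    card_forall_entry fun (i j : Fin (m + 1)) (x : F) => j ≤ i → x = 0]
  simp only [Nat.cast_prod, ← prod_div_distrib]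
  exact prod_congr rfl fun i _ => prod_congr rfl fun j _ =>
    card_and_imp_ne_zero_div_card fun h => by omega
end
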